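/- arXiv:2406.04458 — 5 statements merged into one kernel-verified Lean document; each statement's English description precedes it below -/
import Mathlib

section
/- Let N ≥ 1, let τ_1, …, τ_N be pairwise-distinct positive reals and d_1, …, d_N positive reals. Consider E₀(λ) = λ + (3√2/2) ∑_{j=1}^N (α_j/d_j) (1/√(1+τ_j λ) − 1) for λ > −1/max τ_j. Then the Taylor expansion of E₀ at λ = 0 is E₀(λ) = (1 − (3√2/4) ∑_j α_j τ_j/d_j) λ + (3√2/2) ∑_{k=2}^∞ (−1)^k ((2k−1)!!/(2k)!!) (∑_j α_j τ_j^k/d_j) λ^k. Moreover λ = 0 is a zero of E₀ of order exactly N+1 if and only if α_j = (2√2 d_j)/(3 τ_j) · ∏_{k ≠ j} τ_k/(τ_k − τ_j) for all j. -/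
/-!
The expansion is the binomial series `(1 + x)^(-1/2) = ∑ₖ (-1/2 choose k) xᵏ`, whose coefficients
are `(-1)ᵏ (2k-1)!!/(2k)!!`, applied to each `x = τⱼλ`.

For the order of the zero put `wⱼ = αⱼτⱼ/dⱼ`. Up to nonzero factors, the coefficient of `λ^(m+1)`
is `∑ⱼ wⱼ τⱼ^m - (2√2/3)·0^m`, so the coefficients of `λ, …, λ^N` vanish exactly when the functional
`p ↦ ∑ⱼ wⱼ p(τⱼ)` agrees with `(2√2/3)·p(0)` on polynomials of degree `< N`. By Lagrange
interpolation at the distinct nodes `τⱼ` this means `wⱼ = (2√2/3)·ℓⱼ(0)`, which is the stated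
formula for `αⱼ`. Testing against `X^N - ∏ⱼ(X - τⱼ)` then gives
`∑ⱼ wⱼ τⱼ^N = (2√2/3)(0^N - ∏ⱼ(-τⱼ)) ≠ (2√2/3)·0^N`, so the coefficient of `λ^(N+1)` cannot vanish.
-/

open Polynomial Finset
open scoped Nat

theorem Ring.succ_mul_choose_succ {K : Type*} [Field K] [CharZero K] (r : K) (n : ℕ) :
    (n + 1 : K) * Ring.choose r (n + 1) = (r - n) * Ring.choose r n := by
  have h := Ring.descPochhammer_eq_factorial_smul_choose r (n + 1)
  rw [descPochhammer_succ_right, smeval_mul, Ring.descPochhammer_eq_factorial_smul_choose] at h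
  simp only [smeval_sub, smeval_X, smeval_natCast, nsmul_eq_mul, pow_one, pow_zero,
    Nat.factorial_succ, Nat.cast_mul] at h
  have : (n ! : K) ≠ 0 := by exact_mod_cast n.factorial_ne_zero
  push_cast at h
  apply mul_left_cancel₀ this
  linear_combination -h

theorem Ring.choose_neg_half (k : ℕ) :
    Ring.choose (-1 / 2 : ℝ) k = (-1) ^ k * ((2 * k - 1)‼ / (2 * k)‼ : ℝ) := by
  induction k with
  | zero => simp
  | succ k ih =>
    have hrec := Ring.succ_mul_choose_succ (-1 / 2 : ℝ) k
    rw [ih] at hrec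
    have hodd : (2 * (k + 1) - 1)‼ = (2 * k + 1) * (2 * k - 1)‼ := by
      rw [show 2 * (k + 1) - 1 = 2 * k + 1 by omega, Nat.doubleFactorial_add_one]
    have heven : (2 * (k + 1))‼ = (2 * k + 2) * (2 * k)‼ := Nat.doubleFactorial_add_two _
    have hpos : (0 : ℝ) < (2 * k)‼ := by exact_mod_cast Nat.doubleFactorial_pos _
    rw [hodd, heven]
    push_cast
    field_simp at hrec ⊢
    linear_combination hrec

theorem Ring.choose_neg_half_ne_zero (k : ℕ) : Ring.choose (-1 / 2 : ℝ) k ≠ 0 := by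
  rw [Ring.choose_neg_half]
  have : (0 : ℝ) < (2 * k)‼ := by exact_mod_cast Nat.doubleFactorial_pos _
  have : (0 : ℝ) < (2 * k - 1)‼ := by exact_mod_cast Nat.doubleFactorial_pos _
  positivity

theorem Real.hasSum_choose_neg_half_mul_pow {x : ℝ} (hx : |x| < 1) :
    HasSum (fun k => Ring.choose (-1 / 2 : ℝ) k * x ^ k) (1 / √(1 + x)) := by
  have h := Real.one_add_rpow_hasFPowerSeriesOnBall_zero (a := -1 / 2) |>.hasSum
    (y := x) (by simpa [edist_dist] using hx)
  have hterm (k : ℕ) :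
      binomialSeries ℝ (-1 / 2 : ℝ) k (fun _ => x) = Ring.choose (-1 / 2 : ℝ) k * x ^ k := by
    simp [-FormalMultilinearSeries.apply_eq_prod_smul_coeff, binomialSeries_apply]
  have hsum : (1 + (0 + x)) ^ (-1 / 2 : ℝ) = 1 / √(1 + x) := by
    rw [zero_add, Real.sqrt_eq_rpow, one_div, ← Real.rpow_neg (by linarith [neg_abs_le x])]
    norm_num
  simpa only [hterm, hsum] using h

namespace Lagrange

variable {F ι : Type*} [Field F] {s : Finset ι} {v : ι → F}

theorem sum_mul_eval_of_sum_mul_pow {w : ι → F} {a x : F}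
    (hw : ∀ m < #s, ∑ i ∈ s, w i * v i ^ m = a * x ^ m) {p : F[X]} (hp : p.degree < #s) :
    ∑ i ∈ s, w i * p.eval (v i) = a * p.eval x := by
  rcases eq_or_ne p 0 with rfl | hp0
  · simp
  have hnat : p.natDegree < #s := (natDegree_lt_iff_degree_lt hp0).2 hp
  simp only [eval_eq_sum_range' hnat, mul_sum]
  rw [sum_comm]
  refine sum_congr rfl fun m hm => ?_
  simp only [mul_left_comm (w _), ← mul_sum, hw m (mem_range.1 hm)]
  ring

variable [DecidableEq ι]

theorem eval_basis (i : ι) (x : F) :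
    (Lagrange.basis s v i).eval x = ∏ j ∈ s.erase i, (x - v j) / (v i - v j) := by
  rw [Lagrange.basis, eval_prod]
  refine prod_congr rfl fun j _ => ?_
  rw [basisDivisor, eval_mul, eval_C, eval_sub, eval_X, eval_C, inv_mul_eq_div]

theorem sum_eval_mul_eval_basis (hvs : Set.InjOn v s) {p : F[X]} (hp : p.degree < #s) (x : F) :
    ∑ i ∈ s, p.eval (v i) * (Lagrange.basis s v i).eval x = p.eval x := by
  conv_rhs => rw [eq_interpolate hvs hp, interpolate_apply, eval_finsetSum]
  exact sum_congr rfl fun i _ => by rw [eval_mul, eval_C, mul_comm]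

theorem sum_mul_pow_eq_iff (hvs : Set.InjOn v s) (w : ι → F) (a x : F) :
    (∀ m < #s, ∑ i ∈ s, w i * v i ^ m = a * x ^ m) ↔
      ∀ i ∈ s, w i = a * (Lagrange.basis s v i).eval x := by
  constructor
  · intro hw i hi
    have h := sum_mul_eval_of_sum_mul_pow hw (p := Lagrange.basis s v i) <| by
      rw [degree_basis hvs hi]
      exact_mod_cast Nat.sub_lt (card_pos.2 ⟨i, hi⟩) one_pos
    rwa [sum_eq_single_of_mem i hi fun j hj hji => by rw [eval_basis_of_ne hji.symm hj, mul_zero],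
      eval_basis_self hvs hi, mul_one] at h
  · intro hw m hm
    have h := sum_eval_mul_eval_basis hvs (p := X ^ m) (by rw [degree_X_pow]; exact_mod_cast hm) x
    simp only [eval_pow, eval_X] at h
    rw [← h, mul_sum]
    refine sum_congr rfl fun i hi => ?_
    rw [hw i hi]; ring

theorem sum_eval_basis_mul_pow_card (hvs : Set.InjOn v s) (x : F) :
    ∑ i ∈ s, (Lagrange.basis s v i).eval x * v i ^ #s = x ^ #s - (nodal s v).eval x := by
  have hdeg : (X ^ #s - nodal s v).degree < ↑(#s) := by
    have h := degree_sub_lt_left (p := X ^ #s) (q := nodal s v)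
      (by rw [degree_X_pow, degree_nodal]) (monic_X_pow _).ne_zero
      (by rw [leadingCoeff_X_pow, nodal_monic.leadingCoeff])
    rwa [degree_X_pow] at h
  have h := sum_eval_mul_eval_basis hvs hdeg x
  simp only [eval_sub, eval_pow, eval_X] at h
  rw [← h]
  refine sum_congr rfl fun i hi => ?_
  rw [eval_nodal_at_node hi, sub_zero, mul_comm]

end Lagrange

noncomputable def evansCoeff {N : ℕ} (τ d α : Fin N → ℝ) (k : ℕ) : ℝ :=
  if k = 0 then 0
  else if k = 1 then 1 - 3 * √2 / 4 * ∑ j, α j * τ j / d j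
  else 3 * √2 / 2 * (-1) ^ k * ((2 * k - 1)‼ / (2 * k)‼ : ℝ) * ∑ j, α j * τ j ^ k / d j

section Evans

variable {N : ℕ} (τ d α : Fin N → ℝ)

theorem evansCoeff_zero : evansCoeff τ d α 0 = 0 := rfl

theorem evansCoeff_succ (m : ℕ) :
    evansCoeff τ d α (m + 1) = (if m = 0 then 1 else 0) +
      3 * √2 / 2 * Ring.choose (-1 / 2 : ℝ) (m + 1) * ∑ j, α j * τ j ^ (m + 1) / d j := by
  rcases eq_or_ne m 0 with rfl | hm
  · norm_num [evansCoeff]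
    ring
  · rw [evansCoeff, if_neg m.succ_ne_zero, if_neg (by omega), if_neg hm, Ring.choose_neg_half]
    ring

theorem hasSum_evansCoeff_mul_pow (hτpos : ∀ j, 0 < τ j) {l : ℝ} (hl : ∀ j, τ j * |l| < 1) :
    HasSum (fun k => evansCoeff τ d α k * l ^ k)
      (l + 3 * √2 / 2 * ∑ j, α j / d j * (1 / √(1 + τ j * l) - 1)) := by
  have hseries (j : Fin N) : HasSum
      (fun k => α j / d j * (Ring.choose (-1 / 2 : ℝ) k * (τ j * l) ^ k - if k = 0 then 1 else 0))
      (α j / d j * (1 / √(1 + τ j * l) - 1)) := by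
    refine ((Real.hasSum_choose_neg_half_mul_pow ?_).sub (hasSum_ite_eq 0 1)).mul_left _
    rw [abs_mul, abs_of_pos (hτpos j)]
    exact hl j
  have hcollect (n : ℕ) : ∑ j, α j / d j * (Ring.choose (-1 / 2 : ℝ) n * (τ j * l) ^ n) =
      Ring.choose (-1 / 2 : ℝ) n * l ^ n * ∑ j, α j * τ j ^ n / d j := by
    rw [mul_sum]
    exact sum_congr rfl fun j _ => by ring
  convert (hasSum_ite_eq 1 l).add ((hasSum_sum fun j _ => hseries j).mul_left (3 * √2 / 2))
    using 1
  funext k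
  rcases k with _ | m
  · simp [evansCoeff_zero]
  · simp only [evansCoeff_succ, m.succ_ne_zero, ↓reduceIte, sub_zero, hcollect,
      Nat.add_eq_right]
    split_ifs with hm
    · subst hm
      ring
    · ring

theorem evansCoeff_succ_eq_mul_sub (m : ℕ) :
    evansCoeff τ d α (m + 1) = 3 * √2 / 2 * Ring.choose (-1 / 2 : ℝ) (m + 1) *
      (∑ j, α j * τ j / d j * τ j ^ m - 2 * √2 / 3 * 0 ^ m) := by
  have hsum : ∑ j, α j * τ j ^ (m + 1) / d j = ∑ j, α j * τ j / d j * τ j ^ m :=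
    sum_congr rfl fun j _ => by ring
  rw [evansCoeff_succ, hsum]
  rcases m with _ | m
  · have hsqrt : √2 ^ 2 = 2 := Real.sq_sqrt zero_le_two
    norm_num [Ring.choose_one_right]
    linear_combination -hsqrt / 2
  · simp

theorem evansCoeff_succ_eq_zero_iff (m : ℕ) :
    evansCoeff τ d α (m + 1) = 0 ↔ ∑ j, α j * τ j / d j * τ j ^ m = 2 * √2 / 3 * 0 ^ m := by
  rw [evansCoeff_succ_eq_mul_sub, mul_eq_zero_iff_left, sub_eq_zero]
  exact mul_ne_zero (by positivity) (Ring.choose_neg_half_ne_zero _)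

theorem evansCoeff_vanish_iff (hτ : Function.Injective τ) :
    (∀ k, 1 ≤ k → k ≤ N → evansCoeff τ d α k = 0) ↔
      ∀ j, α j * τ j / d j = 2 * √2 / 3 * (Lagrange.basis univ τ j).eval 0 := by
  have hlag := Lagrange.sum_mul_pow_eq_iff (s := univ) hτ.injOn (fun j => α j * τ j / d j)
    (2 * √2 / 3) 0
  simp only [card_fin, mem_univ, forall_const] at hlag
  rw [← hlag]
  constructor
  · exact fun h m hm => (evansCoeff_succ_eq_zero_iff τ d α m).1 (h (m + 1) (by omega) hm)
  · intro h k hk1 hkN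
    obtain ⟨m, rfl⟩ := Nat.exists_eq_add_of_le' hk1
    exact (evansCoeff_succ_eq_zero_iff τ d α m).2 (h m hkN)

theorem evansCoeff_succ_card_ne_zero (hτpos : ∀ j, 0 < τ j) (hτ : Function.Injective τ)
    (hw : ∀ j, α j * τ j / d j = 2 * √2 / 3 * (Lagrange.basis univ τ j).eval 0) :
    evansCoeff τ d α (N + 1) ≠ 0 := by
  have hpow := Lagrange.sum_eval_basis_mul_pow_card (s := univ) hτ.injOn (0 : ℝ)
  simp only [card_fin] at hpow
  have hnodal : (Lagrange.nodal univ τ).eval 0 ≠ 0 := by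
    rw [Lagrange.eval_nodal]
    exact prod_ne_zero_iff.2 fun j _ => by simpa using (hτpos j).ne'
  rw [Ne, evansCoeff_succ_eq_zero_iff]
  simp only [hw, mul_assoc, ← mul_sum, hpow]
  intro h
  exact hnodal (by linarith [mul_left_cancel₀ (by positivity : 2 * √2 / 3 ≠ 0) h])

theorem evansCoeff_weight_iff (hτpos : ∀ j, 0 < τ j) (hd : ∀ j, 0 < d j) (j : Fin N) :
    α j * τ j / d j = 2 * √2 / 3 * (Lagrange.basis univ τ j).eval 0 ↔
      α j = 2 * √2 * d j / (3 * τ j) * ∏ k ∈ univ.erase j, τ k / (τ k - τ j) := by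
  have hprod : (Lagrange.basis univ τ j).eval 0 = ∏ k ∈ univ.erase j, τ k / (τ k - τ j) := by
    rw [Lagrange.eval_basis]
    exact prod_congr rfl fun k _ => by rw [zero_sub, ← neg_sub, neg_div_neg_eq]
  have hτj := (hτpos j).ne'
  have hdj := (hd j).ne'
  rw [hprod, div_eq_iff hdj, ← eq_div_iff hτj]
  constructor <;> intro h <;> rw [h] <;> field_simp

end Evans

theorem stmt6_general (N : ℕ) (τ d α : Fin N → ℝ)
    (hτpos : ∀ j, 0 < τ j) (hτ : Function.Injective τ) (hd : ∀ j, 0 < d j)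
    (c : ℕ → ℝ)
    (hc : ∀ k, c k = if k = 0 then 0 else if k = 1 then
        1 - 3 * Real.sqrt 2 / 4 * ∑ j, α j * τ j / d j
      else (3 * Real.sqrt 2 / 2) * (-1 : ℝ) ^ k *
        ((Nat.doubleFactorial (2 * k - 1) : ℝ) / (Nat.doubleFactorial (2 * k) : ℝ)) *
        ∑ j, α j * τ j ^ k / d j) :
    (∀ l : ℝ, (∀ j, τ j * |l| < 1) →
        HasSum (fun k : ℕ => c k * l ^ k)
          (l + 3 * Real.sqrt 2 / 2 *
            ∑ j, α j / d j * (1 / Real.sqrt (1 + τ j * l) - 1))) ∧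
    (((∀ k, 1 ≤ k → k ≤ N → c k = 0) ∧ c (N + 1) ≠ 0) ↔
      ∀ j, α j = 2 * Real.sqrt 2 * d j / (3 * τ j) *
        ∏ k ∈ Finset.univ.erase j, τ k / (τ k - τ j)) := by
  obtain rfl : c = evansCoeff τ d α := funext hc
  refine ⟨fun l hl => hasSum_evansCoeff_mul_pow τ d α hτpos hl, ?_⟩
  rw [evansCoeff_vanish_iff τ d α hτ, ← forall_congr' (evansCoeff_weight_iff τ d α hτpos hd)]
  exact ⟨And.left, fun hw => ⟨hw, evansCoeff_succ_card_ne_zero τ d α hτpos hτ hw⟩⟩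

/-- Taylor expansion of the Evans function `E₀` at `λ = 0`, and characterisation of a
zero of order exactly `N+1` via the coefficients `α_j`. -/
theorem stmt6 (N : ℕ) (hN : 1 ≤ N) (τ d α : Fin N → ℝ)
    (hτpos : ∀ j, 0 < τ j) (hτ : Function.Injective τ) (hd : ∀ j, 0 < d j)
    (c : ℕ → ℝ)
    (hc : ∀ k, c k = if k = 0 then 0 else if k = 1 then
        1 - 3 * Real.sqrt 2 / 4 * ∑ j, α j * τ j / d j
      else (3 * Real.sqrt 2 / 2) * (-1 : ℝ) ^ k *
        ((Nat.doubleFactorial (2 * k - 1) : ℝ) / (Nat.doubleFactorial (2 * k) : ℝ)) *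
        ∑ j, α j * τ j ^ k / d j) :
    (∀ l : ℝ, (∀ j, τ j * |l| < 1) →
        HasSum (fun k : ℕ => c k * l ^ k)
          (l + 3 * Real.sqrt 2 / 2 *
            ∑ j, α j / d j * (1 / Real.sqrt (1 + τ j * l) - 1))) ∧
    (((∀ k, 1 ≤ k → k ≤ N → c k = 0) ∧ c (N + 1) ≠ 0) ↔
      ∀ j, α j = 2 * Real.sqrt 2 * d j / (3 * τ j) *
        ∏ k ∈ Finset.univ.erase j, τ k / (τ k - τ j)) :=
  stmt6_general N τ d α hτpos hτ hd c hc
end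

section
/- For integers j ≥ 2 and 0 ≤ i ≤ j−2, the coefficients a_j^i = (2^i/i!) · binom(2j−i, j)/binom(2j, j) satisfy the recurrence (2j/(2j−1)) · a_{j−1}^i = 2(i+1) a_j^{i+1} − (i+1)(i+2) a_j^{i+2}. -/
/-!
Pascal's rule collapses the right-hand side to a multiple of `C(2j-i-2, j-1) / C(2j, j)`, and
`j · C(2j, j) = 2(2j-1) · C(2j-2, j-1)` turns this into the left-hand side.
-/

open Nat

/-- The paper's `a_j^i`. -/
noncomputable def ansatzCoeff (j i : ℕ) : ℝ :=
  2 ^ i / (i ! : ℝ) * (((2 * j - i).choose j : ℝ) / (centralBinom j : ℝ))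

lemma choose_two_mul_succ_sub (n i : ℕ) (hi : i ≤ 2 * n) :
    (2 * (n + 1) - (i + 1)).choose (n + 1) =
      (2 * n - i).choose n + (2 * (n + 1) - (i + 2)).choose (n + 1) := by
  rw [show 2 * (n + 1) - (i + 1) = 2 * n - i + 1 by omega,
    show 2 * (n + 1) - (i + 2) = 2 * n - i by omega, choose_succ_succ]

lemma ansatzCoeff_recurrence (n i : ℕ) (hi : i ≤ 2 * n) :
    2 * ((n : ℝ) + 1) / (2 * ((n : ℝ) + 1) - 1) * ansatzCoeff n i =
      2 * ((i : ℝ) + 1) * ansatzCoeff (n + 1) (i + 1) -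
        ((i : ℝ) + 1) * ((i : ℝ) + 2) * ansatzCoeff (n + 1) (i + 2) := by
  have hcentral : ((n : ℝ) + 1) * centralBinom (n + 1) = 2 * (2 * n + 1) * centralBinom n := by
    exact_mod_cast succ_mul_centralBinom_succ n
  have hpascal := congrArg (Nat.cast : ℕ → ℝ) (choose_two_mul_succ_sub n i hi)
  push_cast at hpascal
  have hc₀ : (centralBinom n : ℝ) ≠ 0 := cast_ne_zero.mpr (centralBinom_ne_zero n)
  have hc₁ : (centralBinom (n + 1) : ℝ) ≠ 0 := cast_ne_zero.mpr (centralBinom_ne_zero _)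
  have hn : 2 * ((n : ℝ) + 1) - 1 ≠ 0 := by linarith [(n.cast_nonneg : (0 : ℝ) ≤ n)]
  simp only [ansatzCoeff, hpascal, factorial_succ, cast_mul, cast_succ]
  field_simp
  linear_combination (2 * (i : ℝ) + 4) * 2 ^ i * ((2 * n - i).choose n : ℝ) * hcentral

/-- Recurrence relation satisfied by the coefficients `a_j^i`. -/
theorem stmt8 (j i : ℕ) (hj : 2 ≤ j) (hi : i ≤ j - 2) (a : ℕ → ℕ → ℝ)
    (ha : ∀ j i, a j i = 2 ^ i / (Nat.factorial i : ℝ) *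
      ((Nat.choose (2 * j - i) j : ℝ) / (Nat.choose (2 * j) j : ℝ))) :
    (2 * (j : ℝ)) / (2 * (j : ℝ) - 1) * a (j - 1) i =
      2 * ((i : ℝ) + 1) * a j (i + 1) - ((i : ℝ) + 1) * ((i : ℝ) + 2) * a j (i + 2) := by
  obtain rfl : a = ansatzCoeff := funext₂ ha
  obtain ⟨n, rfl⟩ : ∃ n, j = n + 1 := ⟨j - 1, by omega⟩
  simpa using ansatzCoeff_recurrence n i (by omega)
end

section
/- For integers j ≥ 1, the polynomials f^j(x) = ∑_{i=0}^j (2^i/i!) (binom(2j−i,j)/binom(2j,j)) x^i satisfy the differential recurrence (2j/(2j−1)) f^{j−1}(x) = 2 (f^j)'(x) − (f^j)''(x) for all real x, where f^0(x) = 1. -/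
/-! Comparing coefficients of `x ^ i` with `k = j - 1`, both sides carry the factor `2 ^ i / i!`,
and the identity reduces to Pascal's rule `C(2k-i+1, k+1) - C(2k-i, k+1) = C(2k-i, k)` together
with the central binomial recurrence `(k+1) C(2k+2, k+1) = 2 (2k+1) C(2k, k)`. -/

open Finset Polynomial

noncomputable section

def frontCoeff (j i : ℕ) : ℝ :=
  2 ^ i / (i.factorial : ℝ) * ((Nat.choose (2 * j - i) j : ℝ) / (Nat.choose (2 * j) j : ℝ))

def frontPoly (j : ℕ) : ℝ[X] :=
  ∑ i ∈ range (j + 1), C (frontCoeff j i) * X ^ i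

theorem eval_frontPoly (j : ℕ) (x : ℝ) :
    (frontPoly j).eval x = ∑ i ∈ range (j + 1), frontCoeff j i * x ^ i := by
  simp [frontPoly, eval_finsetSum]

theorem coeff_frontPoly (j n : ℕ) :
    (frontPoly j).coeff n = if n ≤ j then frontCoeff j n else 0 := by
  simp [frontPoly]

theorem frontCoeff_eq_zero_of_lt {j i : ℕ} (hj : 0 < j) (h : j < i) : frontCoeff j i = 0 := by
  simp [frontCoeff, Nat.choose_eq_zero_of_lt (show 2 * j - i < j by omega)]

theorem coeff_frontPoly_of_pos {j : ℕ} (hj : 0 < j) (n : ℕ) :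
    (frontPoly j).coeff n = frontCoeff j n := by
  rw [coeff_frontPoly]
  split_ifs with h
  · rfl
  · exact (frontCoeff_eq_zero_of_lt hj (not_le.1 h)).symm

theorem choose_two_mul_succ_sub_choose {k i : ℕ} (h : i ≤ k) :
    ((2 * (k + 1) - (i + 1)).choose (k + 1) : ℝ) - (2 * (k + 1) - (i + 2)).choose (k + 1)
      = (2 * k - i).choose k := by
  rw [show 2 * (k + 1) - (i + 1) = 2 * k - i + 1 by omega,
    show 2 * (k + 1) - (i + 2) = 2 * k - i by omega, Nat.choose_succ_succ', Nat.cast_add]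
  ring

theorem choose_two_mul_succ_ratio (k : ℕ) :
    (2 * ((k : ℝ) + 1)) / (2 * ((k : ℝ) + 1) - 1) / (2 * k).choose k
      = 4 / (2 * (k + 1)).choose (k + 1) := by
  have h := Nat.succ_mul_centralBinom_succ k
  simp only [Nat.centralBinom_eq_two_mul_choose] at h
  have h' : ((k : ℝ) + 1) * (2 * (k + 1)).choose (k + 1) = 2 * (2 * k + 1) * (2 * k).choose k := by
    exact_mod_cast h
  have h0 : ((2 * k).choose k : ℝ) ≠ 0 := Nat.cast_ne_zero.2 (Nat.choose_pos (by omega)).ne'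
  have h1 : ((2 * (k + 1)).choose (k + 1) : ℝ) ≠ 0 := Nat.cast_ne_zero.2 (Nat.choose_pos (by omega)).ne'
  have h2 : 2 * ((k : ℝ) + 1) - 1 ≠ 0 := by linarith [(k.cast_nonneg : (0 : ℝ) ≤ k)]
  rw [div_div, div_eq_div_iff (mul_ne_zero h2 h0) h1]
  linear_combination 2 * h'

theorem frontCoeff_recurrence {k i : ℕ} (h : i ≤ k) :
    (2 * ((k : ℝ) + 1)) / (2 * ((k : ℝ) + 1) - 1) * frontCoeff k i
      = 2 * (frontCoeff (k + 1) (i + 1) * ((i : ℝ) + 1))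
        - frontCoeff (k + 1) (i + 2) * ((i : ℝ) + 1 + 1) * ((i : ℝ) + 1) := by
  calc _ = 2 ^ i / (i.factorial : ℝ) * (2 * k - i).choose k
          * ((2 * ((k : ℝ) + 1)) / (2 * ((k : ℝ) + 1) - 1) / (2 * k).choose k) := by
        unfold frontCoeff; ring
    _ = 2 ^ i / (i.factorial : ℝ) * (((2 * (k + 1) - (i + 1)).choose (k + 1) : ℝ)
          - (2 * (k + 1) - (i + 2)).choose (k + 1)) * (4 / (2 * (k + 1)).choose (k + 1)) := by
        rw [choose_two_mul_succ_sub_choose h, choose_two_mul_succ_ratio]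
    _ = _ := by
        unfold frontCoeff
        rw [Nat.factorial_succ (i + 1), Nat.factorial_succ i]
        push_cast
        field_simp
        ring

theorem frontPoly_recurrence (j : ℕ) :
    C ((2 * (j : ℝ)) / (2 * (j : ℝ) - 1)) * frontPoly (j - 1)
      = 2 * derivative (frontPoly j) - derivative (derivative (frontPoly j)) := by
  cases j with
  | zero => simp [frontPoly]
  | succ k =>
    ext n
    rw [coeff_C_mul, coeff_sub, coeff_ofNat_mul, coeff_derivative, coeff_derivative,
      coeff_derivative, coeff_frontPoly_of_pos k.succ_pos, coeff_frontPoly_of_pos k.succ_pos,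
      Nat.add_sub_cancel, coeff_frontPoly]
    split_ifs with hn
    · push_cast
      exact frontCoeff_recurrence hn
    · rw [frontCoeff_eq_zero_of_lt k.succ_pos (by omega),
        frontCoeff_eq_zero_of_lt k.succ_pos (by omega)]
      ring

end

theorem stmt9_general (j : ℕ) (f : ℕ → ℝ → ℝ)
    (hf : ∀ j x, f j x = ∑ i ∈ Finset.range (j + 1),
      2 ^ i / (Nat.factorial i : ℝ) *
        ((Nat.choose (2 * j - i) j : ℝ) / (Nat.choose (2 * j) j : ℝ)) * x ^ i)
    (x : ℝ) :
    (2 * (j : ℝ)) / (2 * (j : ℝ) - 1) * f (j - 1) x =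
      2 * deriv (f j) x - deriv (deriv (f j)) x := by
  have hf_eval : ∀ j, f j = fun x => (frontPoly j).eval x := fun j => funext fun x => by
    rw [hf, eval_frontPoly]; rfl
  have hderiv : ∀ p : ℝ[X], deriv (fun x => p.eval x) = fun x => p.derivative.eval x :=
    fun p => funext fun x => p.deriv
  rw [hf_eval, hf_eval, hderiv, hderiv, ← eval_C (a := (2 * (j : ℝ)) / (2 * (j : ℝ) - 1)) (x := x),
    ← eval_mul, frontPoly_recurrence]
  simp

/-- Differential recurrence for the polynomials `f^j`. -/
theorem stmt9 (j : ℕ) (hj : 1 ≤ j) (f : ℕ → ℝ → ℝ)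
    (hf : ∀ j x, f j x = ∑ i ∈ Finset.range (j + 1),
      2 ^ i / (Nat.factorial i : ℝ) *
        ((Nat.choose (2 * j - i) j : ℝ) / (Nat.choose (2 * j) j : ℝ)) * x ^ i)
    (x : ℝ) :
    (2 * (j : ℝ)) / (2 * (j : ℝ) - 1) * f (j - 1) x =
      2 * deriv (f j) x - deriv (deriv (f j)) x :=
  stmt9_general j f hf x
end

section
/- Fix τ, d ≠ 0 and for j ≥ 0 set v_+^j(x) = (−1)^j ((2j−1)!!/(2j)!!) (τ^j/d) e^{−x} ∑_{i=0}^j (2^i/i!) (binom(2j−i,j)/binom(2j,j)) x^i for x ≥ 0 (with v_+^0(x) = e^{−x}/d). Then for every j ≥ 1 and x ≥ 0: (v_+^j)''(x) = v_+^j(x) + τ v_+^{j−1}(x). -/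
/-!
Since `(2j-1)‼ / (2j)‼ = C(2j, j) / 4^j`, the profile is `v_+^j = (-τ/4)^j / d · e^{-x} P_j(x)`
with `P_j = ∑_{i ≤ j} 2^i/i! · C(2j-i, j) X^i`. As `(e^{-x} p)'' = e^{-x} (p'' - 2p' + p)`,
the claim reduces to the polynomial identity `P_{j+1}'' - 2 P_{j+1}' = -4 P_j`; comparing
coefficients of `X^n`, the factorials cancel and what remains is Pascal's rule
`C(2j-n+1, j+1) = C(2j-n, j) + C(2j-n, j+1)`.
-/

open Polynomial Real Nat

theorem choose_mul_doubleFactorial_two_mul (n : ℕ) :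
    (2 * n).choose n * (2 * n)‼ = 4 ^ n * (2 * n - 1)‼ := by
  rcases n.eq_zero_or_pos with rfl | hpos
  · rfl
  have hfact : (2 * n)! = (2 * n)‼ * (2 * n - 1)‼ := by
    obtain ⟨m, hm⟩ : ∃ m, 2 * n = m + 1 := ⟨2 * n - 1, by omega⟩
    rw [hm, Nat.add_sub_cancel]
    exact factorial_eq_mul_doubleFactorial m
  have hchoose : (2 * n).choose n * n ! * n ! = (2 * n)! := by
    simpa [two_mul] using choose_mul_factorial_mul_factorial (n := 2 * n) (k := n) (by omega)
  refine Nat.eq_of_mul_eq_mul_right (doubleFactorial_pos (2 * n)) ?_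
  calc (2 * n).choose n * (2 * n)‼ * (2 * n)‼ = 4 ^ n * ((2 * n).choose n * n ! * n !) := by
        rw [doubleFactorial_two_mul, show (4 : ℕ) = 2 ^ 2 by rfl, ← pow_mul]; ring
    _ = 4 ^ n * (2 * n - 1)‼ * (2 * n)‼ := by rw [hchoose, hfact]; ring

theorem doubleFactorial_div_doubleFactorial_two_mul (n : ℕ) :
    ((2 * n - 1)‼ : ℝ) / (2 * n)‼ = (2 * n).choose n / 4 ^ n := by
  rw [div_eq_div_iff (by positivity) (by positivity)]
  exact_mod_cast (mul_comm _ _).trans (choose_mul_doubleFactorial_two_mul n).symm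

noncomputable def slowProfilePoly (j : ℕ) : ℝ[X] :=
  ∑ i ∈ Finset.range (j + 1), C ((2 : ℝ) ^ i / i ! * (2 * j - i).choose j) * X ^ i

theorem coeff_slowProfilePoly (j n : ℕ) :
    (slowProfilePoly j).coeff n =
      if n ≤ j then (2 : ℝ) ^ n / n ! * (2 * j - n).choose j else 0 := by
  simp only [slowProfilePoly, finsetSum_coeff, coeff_C_mul_X_pow, Finset.sum_ite_eq,
    Finset.mem_range, Nat.lt_succ_iff]

theorem coeff_slowProfilePoly_succ (j n : ℕ) :
    (slowProfilePoly (j + 1)).coeff n = (2 : ℝ) ^ n / n ! * (2 * (j + 1) - n).choose (j + 1) := by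
  rw [coeff_slowProfilePoly, ite_eq_left_iff, not_le]
  intro hn
  rw [choose_eq_zero_of_lt (by omega), cast_zero, mul_zero]

theorem slowProfilePoly_succ_recurrence (j : ℕ) :
    derivative (derivative (slowProfilePoly (j + 1))) - 2 * derivative (slowProfilePoly (j + 1)) =
      -4 * slowProfilePoly j := by
  ext n
  have hfac₂ :
      (2 : ℝ) ^ (n + 1 + 1) / (n + 1 + 1)! * (n + 1 + 1) * (n + 1) = 4 * (2 ^ n / n !) := by
    rw [factorial_succ, factorial_succ]; push_cast; field_simp; ring
  have hfac₁ : 2 * ((2 : ℝ) ^ (n + 1) / (n + 1)! * (n + 1)) = 4 * (2 ^ n / n !) := by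
    rw [factorial_succ]; push_cast; field_simp; ring
  simp only [coeff_sub, coeff_ofNat_mul, coeff_derivative, coeff_slowProfilePoly_succ, neg_mul,
    coeff_neg, coeff_slowProfilePoly]
  push_cast
  split_ifs with hn
  · rw [show 2 * (j + 1) - (n + 1 + 1) = 2 * j - n by omega,
      show 2 * (j + 1) - (n + 1) = 2 * j - n + 1 by omega, choose_succ_succ']
    push_cast
    linear_combination ((2 * j - n).choose (j + 1) : ℝ) * hfac₂ -
      (((2 * j - n).choose j : ℝ) + (2 * j - n).choose (j + 1)) * hfac₁
  · rw [choose_eq_zero_of_lt (by omega), choose_eq_zero_of_lt (by omega)]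
    simp

theorem hasDerivAt_exp_neg_mul_eval (p : ℝ[X]) (x : ℝ) :
    HasDerivAt (fun y => exp (-y) * p.eval y) (exp (-x) * (derivative p - p).eval x) x := by
  refine ((hasDerivAt_neg x).exp.fun_mul (p.hasDerivAt x)).congr_deriv ?_
  rw [eval_sub]; ring

theorem deriv_deriv_exp_neg_mul_eval (p : ℝ[X]) (x : ℝ) :
    deriv (deriv fun y => exp (-y) * p.eval y) x =
      exp (-x) * (derivative (derivative p) - 2 * derivative p + p).eval x := by
  rw [funext fun y => (hasDerivAt_exp_neg_mul_eval p y).deriv,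
    (hasDerivAt_exp_neg_mul_eval _ x).deriv]
  congr 2
  rw [derivative_sub]; ring

noncomputable def slowProfile (τ d : ℝ) (j : ℕ) (x : ℝ) : ℝ :=
  (-1 : ℝ) ^ j * ((Nat.doubleFactorial (2 * j - 1) : ℝ) / (Nat.doubleFactorial (2 * j) : ℝ)) *
    (τ ^ j / d) * Real.exp (-x) *
    ∑ i ∈ Finset.range (j + 1),
      2 ^ i / (Nat.factorial i : ℝ) *
        ((Nat.choose (2 * j - i) j : ℝ) / (Nat.choose (2 * j) j : ℝ)) * x ^ i

theorem slowProfile_eq (τ d : ℝ) (j : ℕ) :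
    slowProfile τ d j = fun x => (-τ / 4) ^ j / d * (exp (-x) * (slowProfilePoly j).eval x) := by
  funext x
  have hc : ((2 * j).choose j : ℝ) ≠ 0 := by exact_mod_cast (choose_pos (by omega)).ne'
  have hpow : (-τ / 4) ^ j = (-1) ^ j * τ ^ j / 4 ^ j := by rw [div_pow, neg_pow]
  rw [slowProfile, doubleFactorial_div_doubleFactorial_two_mul, slowProfilePoly, eval_finsetSum,
    Finset.mul_sum, Finset.mul_sum, Finset.mul_sum]
  refine Finset.sum_congr rfl fun i _ => ?_
  rw [eval_mul, eval_C, eval_pow, eval_X, hpow]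
  field_simp

theorem stmt10_general (τ d : ℝ) (v : ℕ → ℝ → ℝ)
    (hv : ∀ j x, v j x = (-1 : ℝ) ^ j *
      ((Nat.doubleFactorial (2 * j - 1) : ℝ) / (Nat.doubleFactorial (2 * j) : ℝ)) *
      (τ ^ j / d) * Real.exp (-x) *
      ∑ i ∈ Finset.range (j + 1),
        2 ^ i / (Nat.factorial i : ℝ) *
          ((Nat.choose (2 * j - i) j : ℝ) / (Nat.choose (2 * j) j : ℝ)) * x ^ i)
    (j : ℕ) (hj : 1 ≤ j) (x : ℝ) :
    deriv (deriv (v j)) x = v j x + τ * v (j - 1) x := by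
  obtain ⟨k, rfl⟩ := Nat.exists_eq_add_of_le' hj
  obtain rfl : v = slowProfile τ d := funext fun j => funext (hv j)
  have hode := congrArg (eval x) (slowProfilePoly_succ_recurrence k)
  simp only [eval_sub, eval_mul, eval_neg, eval_ofNat] at hode
  simp only [slowProfile_eq, deriv_const_mul_field', deriv_deriv_exp_neg_mul_eval, eval_add,
    eval_sub, eval_mul, eval_ofNat, Nat.add_sub_cancel]
  linear_combination (-τ / 4) ^ (k + 1) / d * exp (-x) * hode

/-- The slow-field profiles `v_+^j` solve the nonhomogeneous second-order ODE
`(v_+^j)'' = v_+^j + τ v_+^{j-1}`. -/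
theorem stmt10 (τ d : ℝ) (hτ : τ ≠ 0) (hd : d ≠ 0) (v : ℕ → ℝ → ℝ)
    (hv : ∀ j x, v j x = (-1 : ℝ) ^ j *
      ((Nat.doubleFactorial (2 * j - 1) : ℝ) / (Nat.doubleFactorial (2 * j) : ℝ)) *
      (τ ^ j / d) * Real.exp (-x) *
      ∑ i ∈ Finset.range (j + 1),
        2 ^ i / (Nat.factorial i : ℝ) *
          ((Nat.choose (2 * j - i) j : ℝ) / (Nat.choose (2 * j) j : ℝ)) * x ^ i)
    (j : ℕ) (hj : 1 ≤ j) (x : ℝ) (hx : 0 ≤ x) :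
    deriv (deriv (v j)) x = v j x + τ * v (j - 1) x :=
  stmt10_general τ d v hv j hj x
end

section
/- Define polynomials g^j by g^0(y) = 1, g^1(y) = 1 + y, and g^{j+1}(y) = g^j(y) + y²/((2j−1)(2j+1)) · g^{j−1}(y) for j ≥ 1. Also define f^j(y) = ∑_{i=0}^j (2^i/i!) (binom(2j−i,j)/binom(2j,j)) y^i. Then g^j = f^j for all j ≥ 0. -/
/-!
Both families satisfy the same three-term recurrence with the same initial values. For the closed
form this is a coefficient identity: writing `j = i + k`, the coefficient of `y ^ i` in `f^j` is
`2^i (i+k)! (i+2k)! / (i! k! (2i+2k)!)`, and comparing coefficients of `y ^ (i+2)` in the recurrence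
becomes a rational identity in `i` and `k`. Equivalently, `(2j-1)!! f^j` is the reverse Bessel
polynomial `θ_j`, with `θ_{j+1} = (2j+1) θ_j + y² θ_{j-1}`.
-/

open Nat Finset

noncomputable def closedFormCoeff (j i : ℕ) : ℝ :=
  2 ^ i / (i ! : ℝ) * (((2 * j - i).choose j : ℝ) / ((2 * j).choose j : ℝ))

noncomputable def closedForm (j : ℕ) (y : ℝ) : ℝ :=
  ∑ i ∈ range (j + 1), closedFormCoeff j i * y ^ i

-- For `j = 0` the truncated subtraction `2 * 0 - i = 0` gives the coefficient `2 ^ i / i !`.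
lemma closedFormCoeff_of_lt {j i : ℕ} (hj : 0 < j) (h : j < i) : closedFormCoeff j i = 0 := by
  simp [closedFormCoeff, Nat.choose_eq_zero_of_lt (show 2 * j - i < j by omega)]

lemma closedFormCoeff_add_left (i k : ℕ) :
    closedFormCoeff (i + k) i =
      2 ^ i * (i + k)! * (i + 2 * k)! / (i ! * k ! * (2 * i + 2 * k)!) := by
  rw [closedFormCoeff, show 2 * (i + k) - i = i + 2 * k by omega,
    Nat.cast_choose ℝ (show i + k ≤ i + 2 * k by omega),
    Nat.cast_choose ℝ (show i + k ≤ 2 * (i + k) by omega),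
    show i + 2 * k - (i + k) = k by omega, show 2 * (i + k) - (i + k) = i + k by omega,
    show 2 * (i + k) = 2 * i + 2 * k by ring]
  field_simp

lemma closedFormCoeff_succ_succ {n i : ℕ} (hi : i ≤ n) :
    closedFormCoeff (n + 2) (i + 2) =
      closedFormCoeff (n + 1) (i + 2) + closedFormCoeff n i / ((2 * n + 1) * (2 * n + 3)) := by
  obtain ⟨k, rfl⟩ := Nat.exists_eq_add_of_le hi
  rcases k with _ | k
  · have h₂ := closedFormCoeff_add_left (i + 2) 0
    have h₀ := closedFormCoeff_add_left i 0
    simp only [add_zero, mul_zero] at h₂ h₀ ⊢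
    rw [closedFormCoeff_of_lt (by omega) (show i + 1 < i + 2 by omega), h₂, h₀]
    simp +arith only [Nat.factorial_succ]
    push_cast
    field_simp
    ring
  · rw [show i + (k + 1) + 2 = i + 2 + (k + 1) by ring, show i + (k + 1) + 1 = i + 2 + k by ring,
      closedFormCoeff_add_left, closedFormCoeff_add_left, closedFormCoeff_add_left]
    simp +arith only [Nat.factorial_succ]
    push_cast
    field_simp
    ring

lemma closedFormCoeff_zero (j : ℕ) : closedFormCoeff j 0 = 1 := by
  rw [← zero_add j, closedFormCoeff_add_left]
  simp only [zero_add, mul_zero, pow_zero, factorial_zero, cast_one, one_mul]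
  field_simp

lemma closedFormCoeff_one {j : ℕ} (hj : 0 < j) : closedFormCoeff j 1 = 1 := by
  obtain ⟨k, rfl⟩ := Nat.exists_eq_add_of_le' hj
  rw [add_comm, closedFormCoeff_add_left]
  simp +arith only [Nat.factorial_succ]
  push_cast
  field_simp
  ring

lemma closedForm_eq_sum_range {j N : ℕ} (hj : 0 < j) (hN : j < N) (y : ℝ) :
    closedForm j y = ∑ i ∈ range N, closedFormCoeff j i * y ^ i := by
  refine sum_subset (range_subset_range.mpr hN) fun i _ hij => ?_
  rw [closedFormCoeff_of_lt hj (by simpa using hij), zero_mul]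

lemma closedForm_rec {j : ℕ} (hj : 1 ≤ j) (y : ℝ) :
    closedForm (j + 1) y =
      closedForm j y + y ^ 2 / ((2 * (j : ℝ) - 1) * (2 * (j : ℝ) + 1)) * closedForm (j - 1) y := by
  obtain ⟨n, rfl⟩ := Nat.exists_eq_add_of_le' hj
  have htail : ∑ i ∈ range (n + 1), closedFormCoeff (n + 2) (i + 2) * y ^ (i + 2) =
      ∑ i ∈ range (n + 1), closedFormCoeff (n + 1) (i + 2) * y ^ (i + 2) +
        y ^ 2 / ((2 * n + 1) * (2 * n + 3)) * closedForm n y := by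
    rw [closedForm, mul_sum, ← sum_add_distrib]
    refine sum_congr rfl fun i hi => ?_
    rw [closedFormCoeff_succ_succ (mem_range_succ_iff.mp hi)]
    ring
  rw [closedForm, closedForm_eq_sum_range (j := n + 1) (N := n + 3) (by omega) (by omega) y,
    sum_range_succ' _ (n + 2), sum_range_succ' _ (n + 1), sum_range_succ' _ (n + 2),
    sum_range_succ' _ (n + 1)]
  simp only [closedFormCoeff_zero, closedFormCoeff_one (show 0 < n + 2 by omega),
    closedFormCoeff_one (show 0 < n + 1 by omega), Nat.add_sub_cancel]
  push_cast
  rw [htail]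
  ring

/-- The three-term recurrence family `g^j` coincides with the closed-form polynomials `f^j`. -/
theorem stmt11 (g : ℕ → ℝ → ℝ)
    (hg0 : ∀ y, g 0 y = 1) (hg1 : ∀ y, g 1 y = 1 + y)
    (hgrec : ∀ j, 1 ≤ j → ∀ y : ℝ,
      g (j + 1) y = g j y + y ^ 2 / ((2 * (j : ℝ) - 1) * (2 * (j : ℝ) + 1)) * g (j - 1) y) :
    ∀ j y, g j y = ∑ i ∈ Finset.range (j + 1),
      2 ^ i / (Nat.factorial i : ℝ) *
        ((Nat.choose (2 * j - i) j : ℝ) / (Nat.choose (2 * j) j : ℝ)) * y ^ i := by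
  suffices h : ∀ j y, g j y = closedForm j y from h
  intro j
  induction j using Nat.twoStepInduction with
  | zero => simp [hg0, closedForm, closedFormCoeff_zero]
  | one => simp [hg1, closedForm, sum_range_succ, closedFormCoeff_zero, closedFormCoeff_one]
  | more n ih₀ ih₁ =>
    intro y
    rw [hgrec (n + 1) le_add_self, ih₁, Nat.add_sub_cancel, ih₀]
    exact (closedForm_rec (j := n + 1) le_add_self y).symm
end
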